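/- Completeness of the stack-based small-step semantics with respect to the big-step semantics: if ⟨σ, s⟩ ⇓ σ' holds in the big-step semantics and s is a proper statement (not a loop-iteration tuple), then for every stack π, ⟨σ, s, π⟩ →* ⟨σ', skip, π⟩; and if s is a loop-iteration tuple (e1, s1, e2, s2), then for every stack π, ⟨σ, skip, loop1(e1,s1,e2,s2)::π⟩ →* ⟨σ', skip, π⟩. -/
import Mathlib


/-- Janus reversible assignment operators: `+=`, `-=`, `^=`. -/
inductive Op where
  | add | sub | xor
deriving DecidableEq

/-- The operator inverter `I_op`. -/
def Op.inv : Op → Op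
  | .add => .sub
  | .sub => .add
  | .xor => .xor

/-- Interpretation of the operators on integers. -/
def Op.apply : Op → Int → Int → Int
  | .add, a, b => a + b
  | .sub, a, b => a - b
  | .xor, a, b => Int.xor a b

/-- Storage locations: plain variables and indexed array cells. -/
inductive Loc where
  | var (x : String)
  | arr (x : String) (i : Int)
deriving DecidableEq

/-- A store maps variable names and indexed variable names to values. -/
def Store := Loc → Int

def Store.update (σ : Store) (l : Loc) (v : Int) : Store :=
  fun l' => if l' = l then v else σ l'

/-- The empty store maps every variable to zero. -/
def emptyStore : Store := fun _ => 0

/-- Janus expressions. Binary operators are modelled by their interpretation. -/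
inductive Expr where
  | const (c : Int)
  | var (x : String)
  | arr (x : String) (e : Expr)
  | bop (f : Int → Int → Int) (e1 e2 : Expr)

/-- Evaluation of expressions (a deterministic function of the store). -/
def Expr.eval (σ : Store) : Expr → Int
  | .const c => c
  | .var x => σ (.var x)
  | .arr x e => σ (.arr x (Expr.eval σ e))
  | .bop f e1 e2 => f (Expr.eval σ e1) (Expr.eval σ e2)
/-- Janus statements. -/
inductive Stmt where
  | assign (x : String) (op : Op) (e : Expr)
  | assignArr (x : String) (ei : Expr) (op : Op) (e : Expr)
  | cond (e1 : Expr) (s1 s2 : Stmt) (e2 : Expr)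
  | loop (e1 : Expr) (s1 s2 : Stmt) (e2 : Expr)
  | call (id : String)
  | uncall (id : String)
  | skip
  | seq (s1 s2 : Stmt)

/-- The Janus statement inverter `I`. -/
def Stmt.inv : Stmt → Stmt
  | .assign x op e => .assign x op.inv e
  | .assignArr x ei op e => .assignArr x ei op.inv e
  | .cond e1 s1 s2 e2 => .cond e2 s1.inv s2.inv e1
  | .loop e1 s1 s2 e2 => .loop e2 s1.inv s2.inv e1
  | .call id => .uncall id
  | .uncall id => .call id
  | .skip => .skip
  | .seq s1 s2 => .seq s2.inv s1.inv
mutual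
/-- Big-step semantics of Janus, `⟨σ, s⟩ ⇓ σ'`. -/
inductive BigStep (Γ : String → Stmt) : Store → Stmt → Store → Prop where
  | assVar {σ : Store} {x : String} {op : Op} {e : Expr} :
      BigStep Γ σ (.assign x op e)
        (σ.update (.var x) (op.apply (σ (.var x)) (e.eval σ)))
  | assArr {σ : Store} {x : String} {ei e : Expr} {op : Op} :
      BigStep Γ σ (.assignArr x ei op e)
        (σ.update (.arr x (ei.eval σ)) (op.apply (σ (.arr x (ei.eval σ))) (e.eval σ)))
  | call {σ σ' : Store} {id : String} :
      BigStep Γ σ (Γ id) σ' → BigStep Γ σ (.call id) σ'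
  | uncall {σ σ' : Store} {id : String} :
      BigStep Γ σ (Γ id).inv σ' → BigStep Γ σ (.uncall id) σ'
  | seq {σ σ' σ'' : Store} {s1 s2 : Stmt} :
      BigStep Γ σ s1 σ' → BigStep Γ σ' s2 σ'' → BigStep Γ σ (.seq s1 s2) σ''
  | ifTrue {σ σ' : Store} {e1 e2 : Expr} {s1 s2 : Stmt} :
      e1.eval σ ≠ 0 → BigStep Γ σ s1 σ' → e2.eval σ' ≠ 0 →
      BigStep Γ σ (.cond e1 s1 s2 e2) σ'
  | ifFalse {σ σ' : Store} {e1 e2 : Expr} {s1 s2 : Stmt} :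
      e1.eval σ = 0 → BigStep Γ σ s2 σ' → e2.eval σ' = 0 →
      BigStep Γ σ (.cond e1 s1 s2 e2) σ'
  | loopMain {σ σ' σ'' : Store} {e1 e2 : Expr} {s1 s2 : Stmt} :
      e1.eval σ ≠ 0 → BigStep Γ σ s1 σ' → BigLoop Γ σ' e1 s1 s2 e2 σ'' →
      BigStep Γ σ (.loop e1 s1 s2 e2) σ''
  | skip {σ : Store} : BigStep Γ σ .skip σ

/-- Big-step loop-iteration judgement on tuples `(e1, s1, e2, s2)`,
`⟨σ, (e1,s1,e2,s2)⟩ ⇓ σ'`. -/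
inductive BigLoop (Γ : String → Stmt) : Store → Expr → Stmt → Stmt → Expr → Store → Prop where
  | base {σ : Store} {e1 e2 : Expr} {s1 s2 : Stmt} :
      e2.eval σ ≠ 0 → BigLoop Γ σ e1 s1 s2 e2 σ
  | step {σ σ' σ'' σ''' : Store} {e1 e2 : Expr} {s1 s2 : Stmt} :
      e2.eval σ = 0 → BigStep Γ σ s2 σ' → e1.eval σ' = 0 → BigStep Γ σ' s1 σ'' →
      BigLoop Γ σ'' e1 s1 s2 e2 σ''' → BigLoop Γ σ e1 s1 s2 e2 σ'''
end
/-- Stack elements of the stack-based small-step semantics. -/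
inductive Frame where
  | seq (s : Stmt)
  | ifTrue (e : Expr)
  | ifFalse (e : Expr)
  | loop1 (e1 : Expr) (s1 s2 : Stmt) (e2 : Expr)
  | loop2 (e1 : Expr) (s1 s2 : Stmt) (e2 : Expr)

/-- Configurations `⟨σ, s, π⟩` of the stack-based small-step semantics. -/
structure Config where
  store : Store
  stmt : Stmt
  stack : List Frame

/-- The stack-based small-step semantics of Janus. -/
inductive Step (Γ : String → Stmt) : Config → Config → Prop where
  | assVar {σ : Store} {x : String} {op : Op} {e : Expr} {π : List Frame} :
      Step Γ ⟨σ, .assign x op e, π⟩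
        ⟨σ.update (.var x) (op.apply (σ (.var x)) (e.eval σ)), .skip, π⟩
  | assArr {σ : Store} {x : String} {ei e : Expr} {op : Op} {π : List Frame} :
      Step Γ ⟨σ, .assignArr x ei op e, π⟩
        ⟨σ.update (.arr x (ei.eval σ)) (op.apply (σ (.arr x (ei.eval σ))) (e.eval σ)), .skip, π⟩
  | call {σ : Store} {id : String} {π : List Frame} :
      Step Γ ⟨σ, .call id, π⟩ ⟨σ, Γ id, π⟩
  | uncall {σ : Store} {id : String} {π : List Frame} :
      Step Γ ⟨σ, .uncall id, π⟩ ⟨σ, (Γ id).inv, π⟩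
  | seq1 {σ : Store} {s1 s2 : Stmt} {π : List Frame} :
      Step Γ ⟨σ, .seq s1 s2, π⟩ ⟨σ, s1, .seq s2 :: π⟩
  | seq2 {σ : Store} {s2 : Stmt} {π : List Frame} :
      Step Γ ⟨σ, .skip, .seq s2 :: π⟩ ⟨σ, s2, π⟩
  | ifTrue1 {σ : Store} {e1 e2 : Expr} {s1 s2 : Stmt} {π : List Frame} :
      e1.eval σ ≠ 0 →
      Step Γ ⟨σ, .cond e1 s1 s2 e2, π⟩ ⟨σ, s1, .ifTrue e2 :: π⟩
  | ifTrue2 {σ : Store} {e2 : Expr} {π : List Frame} :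
      e2.eval σ ≠ 0 →
      Step Γ ⟨σ, .skip, .ifTrue e2 :: π⟩ ⟨σ, .skip, π⟩
  | ifFalse1 {σ : Store} {e1 e2 : Expr} {s1 s2 : Stmt} {π : List Frame} :
      e1.eval σ = 0 →
      Step Γ ⟨σ, .cond e1 s1 s2 e2, π⟩ ⟨σ, s2, .ifFalse e2 :: π⟩
  | ifFalse2 {σ : Store} {e2 : Expr} {π : List Frame} :
      e2.eval σ = 0 →
      Step Γ ⟨σ, .skip, .ifFalse e2 :: π⟩ ⟨σ, .skip, π⟩
  | loopMain {σ : Store} {e1 e2 : Expr} {s1 s2 : Stmt} {π : List Frame} :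
      e1.eval σ ≠ 0 →
      Step Γ ⟨σ, .loop e1 s1 s2 e2, π⟩ ⟨σ, s1, .loop1 e1 s1 s2 e2 :: π⟩
  | loopBase {σ : Store} {e1 e2 : Expr} {s1 s2 : Stmt} {π : List Frame} :
      e2.eval σ ≠ 0 →
      Step Γ ⟨σ, .skip, .loop1 e1 s1 s2 e2 :: π⟩ ⟨σ, .skip, π⟩
  | loop1 {σ : Store} {e1 e2 : Expr} {s1 s2 : Stmt} {π : List Frame} :
      e2.eval σ = 0 →
      Step Γ ⟨σ, .skip, .loop1 e1 s1 s2 e2 :: π⟩ ⟨σ, s2, .loop2 e1 s1 s2 e2 :: π⟩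
  | loop2 {σ : Store} {e1 e2 : Expr} {s1 s2 : Stmt} {π : List Frame} :
      e1.eval σ = 0 →
      Step Γ ⟨σ, .skip, .loop2 e1 s1 s2 e2 :: π⟩ ⟨σ, s1, .loop1 e1 s1 s2 e2 :: π⟩

/-- Completeness of the stack-based small-step semantics with
respect to the big-step semantics: if `⟨σ, s⟩ ⇓ σ'` holds for a (proper)
statement `s`, then for every stack `π`, `⟨σ, s, π⟩ →* ⟨σ', skip, π⟩`; and if
the loop-iteration judgement `⟨σ, (e1,s1,e2,s2)⟩ ⇓ σ'` holds, then for every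
stack `π`, `⟨σ, skip, loop1(e1,s1,e2,s2)::π⟩ →* ⟨σ', skip, π⟩`. -/
theorem stmt4_completeness (Γ : String → Stmt) :
    (∀ (σ σ' : Store) (s : Stmt), BigStep Γ σ s σ' →
      ∀ π : List Frame,
        Relation.ReflTransGen (Step Γ) ⟨σ, s, π⟩ ⟨σ', .skip, π⟩) ∧
    (∀ (σ σ' : Store) (e1 e2 : Expr) (s1 s2 : Stmt), BigLoop Γ σ e1 s1 s2 e2 σ' →
      ∀ π : List Frame,
        Relation.ReflTransGen (Step Γ)
          ⟨σ, .skip, .loop1 e1 s1 s2 e2 :: π⟩ ⟨σ', .skip, π⟩) := by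
  have H := @BigStep.rec Γ
    (fun σ s σ' _ => ∀ π : List Frame,
      Relation.ReflTransGen (Step Γ) ⟨σ, s, π⟩ ⟨σ', .skip, π⟩)
    (fun σ e1 s1 s2 e2 σ' _ => ∀ π : List Frame,
      Relation.ReflTransGen (Step Γ)
        ⟨σ, .skip, .loop1 e1 s1 s2 e2 :: π⟩ ⟨σ', .skip, π⟩)
    (fun π => Relation.ReflTransGen.single Step.assVar)
    (fun π => Relation.ReflTransGen.single Step.assArr)
    (fun _ ih π => (Relation.ReflTransGen.single Step.call).trans (ih π))
    (fun _ ih π => (Relation.ReflTransGen.single Step.uncall).trans (ih π))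
    (fun _ _ ih1 ih2 π =>
      ((Relation.ReflTransGen.single Step.seq1).trans (ih1 _)).trans
        ((Relation.ReflTransGen.single Step.seq2).trans (ih2 π)))
    (fun h1 _ h2 ih π =>
      ((Relation.ReflTransGen.single (Step.ifTrue1 h1)).trans (ih _)).trans
        (Relation.ReflTransGen.single (Step.ifTrue2 h2)))
    (fun h1 _ h2 ih π =>
      ((Relation.ReflTransGen.single (Step.ifFalse1 h1)).trans (ih _)).trans
        (Relation.ReflTransGen.single (Step.ifFalse2 h2)))
    (fun h1 _ _ ih1 ihl π =>
      ((Relation.ReflTransGen.single (Step.loopMain h1)).trans (ih1 _)).trans (ihl π))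
    (fun _ => Relation.ReflTransGen.refl)
    (fun h => fun π => Relation.ReflTransGen.single (Step.loopBase h))
    (fun h2 _ h1 _ _ ih2 ih1 ihl π =>
      (((Relation.ReflTransGen.single (Step.loop1 h2)).trans (ih2 _)).trans
        ((Relation.ReflTransGen.single (Step.loop2 h1)).trans (ih1 _))).trans (ihl π))
  have H2 := @BigLoop.rec Γ
    (fun σ s σ' _ => ∀ π : List Frame,
      Relation.ReflTransGen (Step Γ) ⟨σ, s, π⟩ ⟨σ', .skip, π⟩)
    (fun σ e1 s1 s2 e2 σ' _ => ∀ π : List Frame,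
      Relation.ReflTransGen (Step Γ)
        ⟨σ, .skip, .loop1 e1 s1 s2 e2 :: π⟩ ⟨σ', .skip, π⟩)
    (fun π => Relation.ReflTransGen.single Step.assVar)
    (fun π => Relation.ReflTransGen.single Step.assArr)
    (fun _ ih π => (Relation.ReflTransGen.single Step.call).trans (ih π))
    (fun _ ih π => (Relation.ReflTransGen.single Step.uncall).trans (ih π))
    (fun _ _ ih1 ih2 π =>
      ((Relation.ReflTransGen.single Step.seq1).trans (ih1 _)).trans
        ((Relation.ReflTransGen.single Step.seq2).trans (ih2 π)))
    (fun h1 _ h2 ih π =>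
      ((Relation.ReflTransGen.single (Step.ifTrue1 h1)).trans (ih _)).trans
        (Relation.ReflTransGen.single (Step.ifTrue2 h2)))
    (fun h1 _ h2 ih π =>
      ((Relation.ReflTransGen.single (Step.ifFalse1 h1)).trans (ih _)).trans
        (Relation.ReflTransGen.single (Step.ifFalse2 h2)))
    (fun h1 _ _ ih1 ihl π =>
      ((Relation.ReflTransGen.single (Step.loopMain h1)).trans (ih1 _)).trans (ihl π))
    (fun _ => Relation.ReflTransGen.refl)
    (fun h => fun π => Relation.ReflTransGen.single (Step.loopBase h))
    (fun h2 _ h1 _ _ ih2 ih1 ihl π =>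
      (((Relation.ReflTransGen.single (Step.loop1 h2)).trans (ih2 _)).trans
        ((Relation.ReflTransGen.single (Step.loop2 h1)).trans (ih1 _))).trans (ihl π))
  exact ⟨fun σ σ' s h => H h, fun σ σ' e1 e2 s1 s2 h => H2 h⟩
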